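/- If θ ∈ ℝ and i, j are distinct vertices of G such that the rational function λ_{i∼j} has a pole at θ (λ_{i∼j}(θ) = −∞), then i ∈ ∞_{θ,G∖j} and j ∈ ∞_{θ,G∖i}; that is, m_θ(G∖{i,j}) = m_θ(G∖j) + 1 and m_θ(G∖{i,j}) = m_θ(G∖i) + 1. -/

import Mathlib

/-!
Godsil's identity `μ(A ∖ i) μ(A ∖ j) - μ(A) μ(A ∖ {i, j}) = ∑_{c : i → j} λ_c μ(A ∖ c)²` and the
Wronskian identity `W(μ(A ∖ i), μ(A)) = ∑_{c ends at i} λ_c μ(A ∖ c)²` it implies write both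
left-hand sides as sums of squares with positive weights `λ_c`. Such a sum vanishes at `θ` to order
at most `2 m_θ(A ∖ c) + 1` for every `c`, while a Wronskian `W(p, q)` vanishes to order at least
`m_θ(p) + m_θ(q) - 1`.

A pole of `λ_{i∼j}` at `θ` produces a path `c : i → j` with `m_θ(G ∖ c) < m_θ(G ∖ {i, j})`.
Removing `j` from `c` leaves a path ending at `i` in `G ∖ j`, and the two bounds for the Wronskian
of `μ(G ∖ {i, j})` and `μ(G ∖ j)` give `m_θ(G ∖ j) < m_θ(G ∖ {i, j})`. The interlacing
`m_θ(H ∖ v) ≤ m_θ(H) + 1`, read off from the expansion of `μ(H)` along `v`, turns this into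
equality. Reversing `c` exchanges `i` and `j`.
-/

open Polynomial
open scoped Classical

/-- A matching of the weighted graph with edge weights `lam`, inside the vertex set `A`:
a set of pairs `(j,k)` with `j < k`, `lam j k ≠ 0`, endpoints in `A`,
no two pairs sharing a vertex. -/
def IsMatching {n : ℕ} (lam : Fin n → Fin n → ℝ) (A : Finset (Fin n))
    (M : Finset (Fin n × Fin n)) : Prop :=
  (∀ e ∈ M, e.1 < e.2 ∧ lam e.1 e.2 ≠ 0 ∧ e.1 ∈ A ∧ e.2 ∈ A) ∧
  ∀ e ∈ M, ∀ f ∈ M, e ≠ f → e.1 ≠ f.1 ∧ e.1 ≠ f.2 ∧ e.2 ≠ f.1 ∧ e.2 ≠ f.2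

/-- The vertices covered by a matching. -/
def mVerts {n : ℕ} (M : Finset (Fin n × Fin n)) : Finset (Fin n) :=
  M.image Prod.fst ∪ M.image Prod.snd

/-- The finite set of matchings inside the vertex set `A`. -/
noncomputable def matchings {n : ℕ} (lam : Fin n → Fin n → ℝ) (A : Finset (Fin n)) :
    Finset (Finset (Fin n × Fin n)) :=
  Finset.univ.filter fun M => IsMatching lam A M

/-- The weighted matching polynomial of the induced weighted subgraph on the vertex set `A`
(the matching polynomial of the empty graph is `1`). -/
noncomputable def mu {n : ℕ} (r : Fin n → ℝ) (lam : Fin n → Fin n → ℝ)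
    (A : Finset (Fin n)) : Polynomial ℝ :=
  ∑ M ∈ matchings lam A,
    (∏ i ∈ A \ mVerts M, (X - C (r i))) * C (∏ e ∈ M, lam e.1 e.2)

/-- The multivariate matching polynomial evaluated at the complex numbers `x 1, …, x n`. -/
noncomputable def muC {n : ℕ} (lam : Fin n → Fin n → ℝ) (x : Fin n → ℂ) : ℂ :=
  ∑ M ∈ matchings lam (Finset.univ : Finset (Fin n)),
    (∏ i ∈ Finset.univ \ mVerts M, x i) * ∏ e ∈ M, (lam e.1 e.2 : ℂ)

/-- The constant `B_G`: for `n ≥ 3` the maximum over vertices `j` and sets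
`A ⊆ [n] ∖ {j}` with `|A| = n - 2` of `∑_{k ∈ A} (-λ_{jk})`; `-λ_{12}/4` for `n = 2`;
`0` for `n = 1`. -/
noncomputable def BG (n : ℕ) (lam : Fin n → Fin n → ℝ) : ℝ :=
  if 3 ≤ n then
    sSup {S : ℝ | ∃ j : Fin n, ∃ A : Finset (Fin n),
      j ∉ A ∧ A.card = n - 2 ∧ S = ∑ k ∈ A, -lam j k}
  else if h : n = 2 then -lam ⟨0, by omega⟩ ⟨1, by omega⟩ / 4
  else 0

/-- `l` is a path from `i` to `j` inside the vertex set `A`: a nonempty list of distinct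
vertices of `A`, starting at `i`, ending at `j`, with consecutive vertices joined by
edges of nonzero weight. -/
def IsPathIn {n : ℕ} (lam : Fin n → Fin n → ℝ) (A : Finset (Fin n)) (i j : Fin n)
    (l : List (Fin n)) : Prop :=
  l ≠ [] ∧ l.Nodup ∧ (∀ v ∈ l, v ∈ A) ∧ l.head? = some i ∧ l.getLast? = some j ∧
    l.Chain' fun u v => lam u v ≠ 0

/-- `λ_c`: the product of `-λ_e` over the edges `e` of the path `c` (equal to `1` for a
trivial path). -/
def pathWeight {n : ℕ} (lam : Fin n → Fin n → ℝ) (l : List (Fin n)) : ℝ :=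
  ((l.zip l.tail).map fun p => -lam p.1 p.2).prod

/-- A real polynomial viewed as a rational function. -/
noncomputable def toRF (p : Polynomial ℝ) : RatFunc ℝ :=
  algebraMap (Polynomial ℝ) (RatFunc ℝ) p

/-- The graph continued fraction `α_v = μ(A)/μ(A ∖ v)` as a rational function. -/
noncomputable def alpha {n : ℕ} (r : Fin n → ℝ) (lam : Fin n → Fin n → ℝ) (v : Fin n)
    (A : Finset (Fin n)) : RatFunc ℝ :=
  toRF (mu r lam A) / toRF (mu r lam (A.erase v))

/-- `λ_{i∼j} = -(∑_{c ∈ [i→j]} λ_c · μ(A∖c)²) / μ(A∖{i,j})²` as a rational function. -/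
noncomputable def lamSim {n : ℕ} (r : Fin n → ℝ) (lam : Fin n → Fin n → ℝ) (i j : Fin n)
    (A : Finset (Fin n)) : RatFunc ℝ :=
  -(∑ᶠ l ∈ {l : List (Fin n) | IsPathIn lam A i j l},
      toRF (C (pathWeight lam l) * mu r lam (A \ l.toFinset) ^ 2)) /
    toRF (mu r lam ((A.erase i).erase j)) ^ 2

/-- The value of a rational function at `θ`, taken after cancelling common factors;
`none` encodes the value `∞` (a pole). -/
noncomputable def valAt (f : RatFunc ℝ) (θ : ℝ) : Option ℝ :=
  if f.denom.eval θ = 0 then none else some (f.num.eval θ / f.denom.eval θ)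

/-- The set `0_{θ,A}` of θ-essential vertices: `m_θ(A∖v) = m_θ(A) - 1`. -/
def zeroSet {n : ℕ} (r : Fin n → ℝ) (lam : Fin n → Fin n → ℝ) (θ : ℝ)
    (A : Finset (Fin n)) : Set (Fin n) :=
  {v | v ∈ A ∧
    (mu r lam A).rootMultiplicity θ = (mu r lam (A.erase v)).rootMultiplicity θ + 1}

/-- The set `∞_{θ,A}`: `m_θ(A∖v) = m_θ(A) + 1`. -/
def infSet {n : ℕ} (r : Fin n → ℝ) (lam : Fin n → Fin n → ℝ) (θ : ℝ)
    (A : Finset (Fin n)) : Set (Fin n) :=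
  {v | v ∈ A ∧
    (mu r lam (A.erase v)).rootMultiplicity θ = (mu r lam A).rootMultiplicity θ + 1}

/-- The set `+_{θ,A}`: `m_θ(A∖v) = m_θ(A)` and `α_v(A)(θ) > 0`. -/
def plusSet {n : ℕ} (r : Fin n → ℝ) (lam : Fin n → Fin n → ℝ) (θ : ℝ)
    (A : Finset (Fin n)) : Set (Fin n) :=
  {v | v ∈ A ∧
    (mu r lam (A.erase v)).rootMultiplicity θ = (mu r lam A).rootMultiplicity θ ∧
    ∃ t : ℝ, valAt (alpha r lam v A) θ = some t ∧ 0 < t}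

/-- The set `−_{θ,A}`: `m_θ(A∖v) = m_θ(A)` and `α_v(A)(θ) < 0`. -/
def minusSet {n : ℕ} (r : Fin n → ℝ) (lam : Fin n → Fin n → ℝ) (θ : ℝ)
    (A : Finset (Fin n)) : Set (Fin n) :=
  {v | v ∈ A ∧
    (mu r lam (A.erase v)).rootMultiplicity θ = (mu r lam A).rootMultiplicity θ ∧
    ∃ t : ℝ, valAt (alpha r lam v A) θ = some t ∧ t < 0}

/-- The frontier `∂0_{θ,A}`: vertices not in `0_{θ,A}` with a neighbor in `0_{θ,A}`. -/
def frontierZero {n : ℕ} (r : Fin n → ℝ) (lam : Fin n → Fin n → ℝ) (θ : ℝ)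
    (A : Finset (Fin n)) : Set (Fin n) :=
  {v | v ∈ A ∧ v ∉ zeroSet r lam θ A ∧ ∃ w ∈ zeroSet r lam θ A, lam v w ≠ 0}

/-- The underlying simple graph: edges are the pairs with nonzero edge weight. -/
def wGraph {n : ℕ} (lam : Fin n → Fin n → ℝ) : SimpleGraph (Fin n) :=
  SimpleGraph.fromRel fun j k => lam j k ≠ 0

open Finset

section RootMultiplicity

lemma pow_add_sub_one_dvd_wronskian {R : Type*} [CommRing R] (a b : R[X]) (t : R) :
    (X - C t) ^ (a.rootMultiplicity t + b.rootMultiplicity t - 1) ∣ wronskian a b := by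
  set α := a.rootMultiplicity t
  set β := b.rootMultiplicity t
  have hab : (X - C t) ^ (α + (β - 1)) ∣ a * derivative b := by
    rw [pow_add]
    exact mul_dvd_mul (pow_rootMultiplicity_dvd a t)
      (pow_sub_one_dvd_derivative_of_pow_dvd (pow_rootMultiplicity_dvd b t))
  have hba : (X - C t) ^ (α - 1 + β) ∣ derivative a * b := by
    rw [pow_add]
    exact mul_dvd_mul (pow_sub_one_dvd_derivative_of_pow_dvd (pow_rootMultiplicity_dvd a t))
      (pow_rootMultiplicity_dvd b t)
  exact dvd_sub ((pow_dvd_pow _ (by omega)).trans hab) ((pow_dvd_pow _ (by omega)).trans hba)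

lemma exists_rootMultiplicity_lt_of_not_pow_dvd_sum {R ι : Type*} [CommRing R] {t : R}
    {k : ℕ} {s : Finset ι} {a q : ι → R[X]}
    (h : ¬ (X - C t) ^ (2 * k) ∣ ∑ i ∈ s, a i * q i ^ 2) :
    ∃ i ∈ s, (q i).rootMultiplicity t < k := by
  contrapose! h
  refine dvd_sum fun i hi => dvd_mul_of_dvd_right ?_ _
  rw [mul_comm, pow_mul]
  exact pow_dvd_pow_of_dvd ((pow_dvd_pow _ (h i hi)).trans (pow_rootMultiplicity_dvd _ t)) 2

/-- After factoring out `(X - C t) ^ (2 * k)`, with `k` the least order of the `q i` at `t`, the sum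
is positive at `t`. -/
lemma not_pow_dvd_sum_C_mul_sq {K ι : Type*} [Field K] [LinearOrder K] [IsStrictOrderedRing K]
    (t : K) {s : Finset ι} {a : ι → K} {q : ι → K[X]}
    (ha : ∀ i ∈ s, 0 < a i) (hq : ∀ i ∈ s, q i ≠ 0) {i₀ : ι} (hi₀ : i₀ ∈ s) :
    ¬ (X - C t) ^ (2 * (q i₀).rootMultiplicity t + 1) ∣ ∑ i ∈ s, C (a i) * q i ^ 2 := by
  obtain ⟨i₁, hi₁, hmin⟩ := s.exists_min_image (fun i => (q i).rootMultiplicity t) ⟨i₀, hi₀⟩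
  set k := (q i₁).rootMultiplicity t
  have hdvd : ∀ i ∈ s, ∃ p, q i = (X - C t) ^ k * p := fun i hi =>
    (pow_dvd_pow _ (hmin i hi)).trans (pow_rootMultiplicity_dvd _ t)
  choose! p hp using hdvd
  have hp₁ : (p i₁).eval t ≠ 0 := by
    intro h0
    apply pow_rootMultiplicity_not_dvd (hq i₁ hi₁) t
    calc (X - C t) ^ (k + 1) = (X - C t) ^ k * (X - C t) := pow_succ _ _
      _ ∣ (X - C t) ^ k * p i₁ := mul_dvd_mul_left _ (dvd_iff_isRoot.2 h0)
      _ = q i₁ := (hp i₁ hi₁).symm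
  have hsum : ∑ i ∈ s, C (a i) * q i ^ 2 = (X - C t) ^ (2 * k) * ∑ i ∈ s, C (a i) * p i ^ 2 := by
    rw [mul_sum]
    refine sum_congr rfl fun i hi => ?_
    rw [hp i hi]
    ring
  have hpos : 0 < (∑ i ∈ s, C (a i) * p i ^ 2).eval t := by
    rw [eval_finsetSum]
    refine sum_pos' (fun i hi => ?_) ⟨i₁, hi₁, ?_⟩ <;> simp only [eval_mul, eval_C, eval_pow]
    · exact mul_nonneg (ha i hi).le (sq_nonneg _)
    · exact mul_pos (ha i₁ hi₁) (by positivity)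
  intro h
  have h' : (X - C t) ^ (2 * k) * (X - C t) ∣ (X - C t) ^ (2 * k) * ∑ i ∈ s, C (a i) * p i ^ 2 := by
    rw [← pow_succ, ← hsum]
    exact (pow_dvd_pow _ (by have := hmin i₀ hi₀; omega)).trans h
  rw [mul_dvd_mul_iff_left (pow_ne_zero _ (X_sub_C_ne_zero t)), dvd_iff_isRoot] at h'
  exact hpos.ne' h'

/-- The reduced numerator of `p / q` does not vanish at a zero of the reduced denominator, and
`num * q = p * denom`. -/
lemma not_pow_rootMultiplicity_dvd_of_denom_eval_eq_zero {K : Type*} [Field K] {p q : K[X]}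
    (hq : q ≠ 0) {t : K}
    (h : (algebraMap K[X] (RatFunc K) p / algebraMap K[X] (RatFunc K) q).denom.eval t = 0) :
    ¬ (X - C t) ^ q.rootMultiplicity t ∣ p := by
  set f := algebraMap K[X] (RatFunc K) p / algebraMap K[X] (RatFunc K) q
  have hp : p ≠ 0 := by
    rintro rfl
    simp [f] at h
  have hnum : f.num ≠ 0 := RatFunc.num_ne_zero (by simpa [f, hq] using hp)
  have hnumt : f.num.rootMultiplicity t = 0 := rootMultiplicity_eq_zero fun hroot =>
    not_isUnit_X_sub_C t <| (RatFunc.isCoprime_num_denom f).isUnit_of_dvd'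
      (dvd_iff_isRoot.2 hroot) (dvd_iff_isRoot.2 h)
  have hden : 0 < f.denom.rootMultiplicity t := (rootMultiplicity_pos (RatFunc.denom_ne_zero f)).2 h
  have hmul := congrArg (rootMultiplicity t)
    ((RatFunc.num_mul_eq_mul_denom_iff (x := f) (p := p) hq).2 rfl)
  rw [rootMultiplicity_mul (mul_ne_zero hnum hq),
    rootMultiplicity_mul (mul_ne_zero hp (RatFunc.denom_ne_zero f))] at hmul
  rw [← le_rootMultiplicity_iff hp]
  omega

end RootMultiplicity

section Matchings

variable {n : ℕ} {r : Fin n → ℝ} {lam : Fin n → Fin n → ℝ} {A : Finset (Fin n)}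
  {M : Finset (Fin n × Fin n)} {v u : Fin n}

lemma mem_matchings : M ∈ matchings lam A ↔ IsMatching lam A M := by
  simp [matchings]

lemma mem_mVerts {x : Fin n} : x ∈ mVerts M ↔ ∃ e ∈ M, e.1 = x ∨ e.2 = x := by
  simp only [mVerts, mem_union, mem_image]
  aesop

lemma matchings_erase (v : Fin n) :
    matchings lam (A.erase v) = (matchings lam A).filter (v ∉ mVerts ·) := by
  ext M
  simp only [mem_filter, mem_matchings, IsMatching, mem_erase, mem_mVerts]
  grind

lemma mu_monic (A : Finset (Fin n)) : (mu r lam A).Monic := by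
  have hdeg (B : Finset (Fin n)) : (∏ i ∈ B, (X - C (r i))).degree = (#B : WithBot ℕ) := by
    simp [degree_prod]
  have hempty : ∅ ∈ matchings lam A := by simp [mem_matchings, IsMatching]
  rw [mu, ← sum_erase_add _ _ hempty]
  simp only [mVerts, image_empty, union_empty, sdiff_empty, prod_empty, map_one, mul_one]
  refine (monic_prod_of_monic _ _ fun i _ => monic_X_sub_C _).add_of_right ?_
  rw [hdeg]
  refine (degree_sum_le _ _).trans_lt ((Finset.sup_lt_iff (WithBot.bot_lt_coe _)).2 fun M hM => ?_)
  obtain ⟨hM0, hM⟩ := mem_erase.1 hM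
  obtain ⟨e, he⟩ := nonempty_iff_ne_empty.2 hM0
  have hcard : #(A \ mVerts M) < #A := card_lt_card <| (ssubset_iff_of_subset sdiff_subset).2
    ⟨e.1, ((mem_matchings.1 hM).1 e he).2.2.1,
      fun h => (mem_sdiff.1 h).2 (mem_mVerts.2 ⟨e, he, Or.inl rfl⟩)⟩
  calc ((∏ i ∈ A \ mVerts M, (X - C (r i))) * C (∏ e ∈ M, lam e.1 e.2)).degree
      ≤ #(A \ mVerts M) + 0 := degree_mul_le_of_le (hdeg _).le degree_C_le
    _ < #A := by rw [add_zero]; exact_mod_cast hcard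

lemma mu_ne_zero (A : Finset (Fin n)) : mu r lam A ≠ 0 := (mu_monic A).ne_zero

lemma derivative_mu (A : Finset (Fin n)) :
    derivative (mu r lam A) = ∑ v ∈ A, mu r lam (A.erase v) := by
  simp only [mu, derivative_sum, derivative_mul, derivative_C, mul_zero, add_zero,
    derivative_prod_finset, derivative_X_sub_C, mul_one, sum_mul]
  refine (sum_comm' fun M v => ?_).trans (sum_congr rfl fun v _ => sum_congr rfl fun M _ => ?_)
  · rw [matchings_erase, mem_filter, mem_sdiff]
    tauto
  · rw [erase_sdiff_comm]


def sortedPair (v u : Fin n) : Fin n × Fin n := (min v u, max v u)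

lemma sortedPair_injective (v : Fin n) : Function.Injective (sortedPair v) := by
  intro u w h
  simp only [sortedPair, Prod.mk.injEq] at h
  grind

lemma lam_sortedPair (hsym : ∀ j k, lam j k = lam k j) (v u : Fin n) :
    lam (sortedPair v u).1 (sortedPair v u).2 = lam v u := by
  rcases le_total v u with h | h <;> simp [sortedPair, h, hsym]

lemma mVerts_insert_sortedPair :
    mVerts (insert (sortedPair v u) M) = insert v (insert u (mVerts M)) := by
  ext x
  simp only [mVerts, sortedPair, image_insert, mem_union, mem_insert]
  grind

lemma insert_sortedPair_mem_matchings (hsym : ∀ j k, lam j k = lam k j) (hv : v ∈ A)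
    (hu : u ∈ A.erase v) (hvu : lam v u ≠ 0) (hM : M ∈ matchings lam ((A.erase v).erase u)) :
    insert (sortedPair v u) M ∈ matchings lam A := by
  have hlam := lam_sortedPair hsym v u
  simp only [mem_matchings, IsMatching, sortedPair, mem_erase] at *
  grind

lemma erase_sortedPair_mem_matchings (hM : M ∈ matchings lam A) (he : sortedPair v u ∈ M) :
    M.erase (sortedPair v u) ∈ matchings lam ((A.erase v).erase u) := by
  obtain ⟨hedges, hdisj⟩ := mem_matchings.1 hM
  refine mem_matchings.2 ⟨fun f hf => ?_, fun f hf g hg =>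
    hdisj f (mem_of_mem_erase hf) g (mem_of_mem_erase hg)⟩
  obtain ⟨hfe, hf⟩ := mem_erase.1 hf
  have := hdisj _ he f hf (Ne.symm hfe)
  have := hedges f hf
  simp only [sortedPair, mem_erase] at *
  grind

lemma sortedPair_notMem_of_mem_matchings (hM : M ∈ matchings lam ((A.erase v).erase u)) :
    sortedPair v u ∉ M := fun he => by
  have := ((mem_matchings.1 hM).1 _ he).2.2.1
  simp only [sortedPair, mem_erase] at this
  grind

lemma filter_mem_mVerts_eq_biUnion (v : Fin n) :
    (matchings lam A).filter (v ∈ mVerts ·) =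
      (A.erase v).biUnion fun u => (matchings lam A).filter (sortedPair v u ∈ ·) := by
  ext M
  simp only [mem_filter, mem_biUnion, mem_erase, mem_mVerts]
  constructor
  · rintro ⟨hM, e, he, hev⟩
    have := (mem_matchings.1 hM).1 e he
    rcases hev with rfl | rfl
    · refine ⟨e.2, ⟨this.1.ne', this.2.2.2⟩, hM, ?_⟩
      simpa [sortedPair, this.1.le] using he
    · refine ⟨e.1, ⟨this.1.ne, this.2.2.1⟩, hM, ?_⟩
      simpa [sortedPair, this.1.le] using he
  · rintro ⟨u, -, hM, he⟩
    exact ⟨hM, _, he, by rcases le_total v u with h | h <;> simp [sortedPair, h]⟩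

lemma pairwiseDisjoint_filter_sortedPair_mem (v : Fin n) :
    (A.erase v : Set (Fin n)).PairwiseDisjoint
      fun u => (matchings lam A).filter (sortedPair v u ∈ ·) := by
  intro u _ w _ huw
  refine disjoint_left.2 fun M hu hw => ?_
  have := (mem_matchings.1 (mem_filter.1 hu).1).2 _ (mem_filter.1 hu).2 _ (mem_filter.1 hw).2
    ((sortedPair_injective v).ne huw)
  simp only [sortedPair] at this
  grind

lemma sum_filter_sortedPair_mem (hsym : ∀ j k, lam j k = lam k j) (hv : v ∈ A)
    (hu : u ∈ A.erase v) :
    ∑ M ∈ (matchings lam A).filter (sortedPair v u ∈ ·),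
        (∏ i ∈ A \ mVerts M, (X - C (r i))) * C (∏ e ∈ M, lam e.1 e.2) =
      C (lam v u) * mu r lam ((A.erase v).erase u) := by
  by_cases hvu : lam v u = 0
  · rw [hvu, C_0, zero_mul]
    refine sum_eq_zero fun M hM => absurd ?_ ((mem_matchings.1 (mem_filter.1 hM).1).1 _
      (mem_filter.1 hM).2).2.1
    rw [lam_sortedPair hsym, hvu]
  rw [mu, mul_sum]
  refine (sum_nbij' (insert (sortedPair v u)) (·.erase (sortedPair v u)) (fun M hM => ?_)
    (fun M hM => ?_) (fun M hM => ?_) (fun M hM => ?_) (fun M hM => ?_)).symm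
  · exact mem_filter.2 ⟨insert_sortedPair_mem_matchings hsym hv hu hvu hM, mem_insert_self _ _⟩
  · exact erase_sortedPair_mem_matchings (mem_filter.1 hM).1 (mem_filter.1 hM).2
  · exact erase_insert (sortedPair_notMem_of_mem_matchings hM)
  · exact insert_erase (mem_filter.1 hM).2
  · have hsdiff : A \ mVerts (insert (sortedPair v u) M) = (A.erase v).erase u \ mVerts M := by
      ext x
      simp only [mVerts_insert_sortedPair, mem_sdiff, mem_insert, mem_erase]
      tauto
    rw [hsdiff, prod_insert (sortedPair_notMem_of_mem_matchings hM), lam_sortedPair hsym, map_mul]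
    ring

theorem mu_eq_X_sub_C_mul_add_sum (hsym : ∀ j k, lam j k = lam k j) (hv : v ∈ A) :
    mu r lam A = (X - C (r v)) * mu r lam (A.erase v) +
      ∑ u ∈ A.erase v, C (lam v u) * mu r lam ((A.erase v).erase u) := by
  rw [mu, ← sum_filter_not_add_sum_filter _ (v ∈ mVerts ·)]
  congr 1
  · rw [mu, matchings_erase, mul_sum]
    refine sum_congr rfl fun M hM => ?_
    rw [← insert_erase (mem_sdiff.2 ⟨hv, (mem_filter.1 hM).2⟩), prod_insert (notMem_erase _ _),
      erase_sdiff_comm, mul_assoc]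
  · rw [filter_mem_mVerts_eq_biUnion, sum_biUnion (pairwiseDisjoint_filter_sortedPair_mem v)]
    exact sum_congr rfl fun u hu => sum_filter_sortedPair_mem hsym hv hu

end Matchings

section Paths

variable {n : ℕ} {r : Fin n → ℝ} {lam : Fin n → Fin n → ℝ} {A : Finset (Fin n)}
  {i j w : Fin n} {l t : List (Fin n)}

lemma isPathIn_iff : IsPathIn lam A i j l ↔ l ≠ [] ∧ l.Nodup ∧ (∀ v ∈ l, v ∈ A) ∧
    l.head? = some i ∧ l.getLast? = some j ∧ l.IsChain (fun u v => lam u v ≠ 0) :=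
  Iff.rfl

lemma IsPathIn.exists_eq_cons (h : IsPathIn lam A i j l) : ∃ t, l = i :: t := by
  obtain ⟨hne, -, -, hhead, -⟩ := h
  cases l with
  | nil => exact absurd rfl hne
  | cons a t => exact ⟨t, by simpa using hhead⟩

lemma IsPathIn.left_mem (h : IsPathIn lam A i j l) : i ∈ A :=
  h.2.2.1 i (List.mem_of_mem_head? h.2.2.2.1)

lemma IsPathIn.right_mem (h : IsPathIn lam A i j l) : j ∈ A :=
  h.2.2.1 j (List.mem_of_mem_getLast? h.2.2.2.2.1)

lemma IsPathIn.exists_eq_cons_cons (h : IsPathIn lam A i j l) (hij : i ≠ j) :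
    ∃ w t, l = i :: w :: t := by
  obtain ⟨t, rfl⟩ := h.exists_eq_cons
  cases t with
  | nil => exact absurd (by simpa using h.2.2.2.2.1) hij
  | cons w t => exact ⟨w, t, rfl⟩

lemma isPathIn_cons_cons_iff :
    IsPathIn lam A i j (i :: w :: t) ↔
      i ∈ A ∧ lam i w ≠ 0 ∧ IsPathIn lam (A.erase i) w j (w :: t) := by
  simp only [isPathIn_iff, List.nodup_cons, List.mem_cons, List.isChain_cons_cons, mem_erase,
    List.getLast?_cons_cons, List.head?_cons]
  grind

lemma isPathIn_self_iff (hj : j ∈ A) : IsPathIn lam A j j l ↔ l = [j] := by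
  refine ⟨fun h => ?_, fun h => h ▸ by simp [isPathIn_iff, hj]⟩
  obtain ⟨t, rfl⟩ := h.exists_eq_cons
  cases t with
  | nil => rfl
  | cons w t =>
    have hlast := h.2.2.2.2.1
    rw [List.getLast?_cons_cons, List.getLast?_eq_some_iff] at hlast
    obtain ⟨s, hs⟩ := hlast
    exact absurd (hs ▸ List.mem_append_right s (List.mem_singleton_self j))
      (List.nodup_cons.1 h.2.1).1

lemma IsPathIn.reverse (hsym : ∀ j k, lam j k = lam k j) (h : IsPathIn lam A i j l) :
    IsPathIn lam A j i l.reverse := by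
  obtain ⟨hne, hnodup, hA, hhead, hlast, hchain⟩ := h
  refine ⟨by simpa using hne, List.nodup_reverse.2 hnodup, by simpa using hA,
    by rwa [List.head?_reverse], by rwa [List.getLast?_reverse], ?_⟩
  exact List.isChain_reverse.2 (hchain.imp fun a b hab => hsym a b ▸ hab)

lemma pathWeight_cons_cons (a b : Fin n) (t : List (Fin n)) :
    pathWeight lam (a :: b :: t) = -lam a b * pathWeight lam (b :: t) := by
  simp [pathWeight]

lemma pathWeight_pos (hnonpos : ∀ j k, lam j k ≤ 0) :
    ∀ {l : List (Fin n)}, l.IsChain (fun u v => lam u v ≠ 0) → 0 < pathWeight lam l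
  | [], _ | [_], _ => by simp [pathWeight]
  | a :: b :: t, h => by
    rw [List.isChain_cons_cons] at h
    rw [pathWeight_cons_cons]
    exact mul_pos (neg_pos.2 ((hnonpos a b).lt_of_ne h.1)) (pathWeight_pos hnonpos h.2)

lemma setOf_isPathIn_finite (lam : Fin n → Fin n → ℝ) (A : Finset (Fin n)) (i j : Fin n) :
    {l | IsPathIn lam A i j l}.Finite :=
  (List.finite_length_le (Fin n) n).subset fun _ hl => by
    simpa using hl.2.1.length_le_card

noncomputable def paths (lam : Fin n → Fin n → ℝ) (A : Finset (Fin n)) (i j : Fin n) :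
    Finset (List (Fin n)) :=
  (setOf_isPathIn_finite lam A i j).toFinset

@[simp]
lemma mem_paths : l ∈ paths lam A i j ↔ IsPathIn lam A i j l :=
  Set.Finite.mem_toFinset _

/-- The numerator `∑_{c ∈ [i → j]} λ_c μ(A ∖ c)²` of `λ_{i∼j}`. -/
noncomputable def pathSum (r : Fin n → ℝ) (lam : Fin n → Fin n → ℝ) (A : Finset (Fin n))
    (i j : Fin n) : ℝ[X] :=
  ∑ l ∈ paths lam A i j, C (pathWeight lam l) * mu r lam (A \ l.toFinset) ^ 2

lemma lamSim_eq :
    lamSim r lam i j A =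
      toRF (-pathSum r lam A i j) / toRF (mu r lam ((A.erase i).erase j) ^ 2) := by
  rw [lamSim, finsum_mem_eq_finite_toFinset_sum _ (setOf_isPathIn_finite lam A i j)]
  simp only [toRF, map_neg, map_pow, pathSum, map_sum, paths]

lemma pathSum_self (hj : j ∈ A) : pathSum r lam A j j = mu r lam (A.erase j) ^ 2 := by
  have : paths lam A j j = {[j]} := by
    ext l
    rw [mem_paths, isPathIn_self_iff hj, mem_singleton]
  simp [pathSum, this, pathWeight, erase_eq]

lemma pathSum_eq_sum_cons (hi : i ∈ A) (hij : i ≠ j) :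
    pathSum r lam A i j = ∑ w ∈ A.erase i, C (-lam i w) * pathSum r lam (A.erase i) w j := by
  rw [← sum_filter_of_ne (p := fun w => lam i w ≠ 0) fun w _ h => by
    contrapose! h
    rw [h, neg_zero, C_0, zero_mul]]
  simp only [pathSum, mul_sum, sum_sigma']
  refine (sum_bij (fun x _ => i :: x.2) (fun x hx => ?_) (fun x hx y hy hxy => ?_)
    (fun l hl => ?_) (fun x hx => ?_)).symm
  · obtain ⟨hw, hl⟩ := mem_sigma.1 hx
    obtain ⟨t, ht⟩ := (mem_paths.1 hl).exists_eq_cons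
    rw [mem_paths, ht, isPathIn_cons_cons_iff]
    exact ⟨hi, (mem_filter.1 hw).2, ht ▸ mem_paths.1 hl⟩
  · have hl := (mem_paths.1 (mem_sigma.1 hx).2).2.2.2.1
    have hl' := (mem_paths.1 (mem_sigma.1 hy).2).2.2.2.1
    simp only [List.cons.injEq, true_and] at hxy
    rw [hxy, hl'] at hl
    exact Sigma.ext (Option.some_injective _ hl).symm (heq_of_eq hxy)
  · obtain ⟨w, t, rfl⟩ := (mem_paths.1 hl).exists_eq_cons_cons hij
    obtain ⟨-, hiw, hpath⟩ := isPathIn_cons_cons_iff.1 (mem_paths.1 hl)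
    exact ⟨⟨w, w :: t⟩, mem_sigma.2 ⟨mem_filter.2 ⟨hpath.2.2.1 w List.mem_cons_self, hiw⟩,
      mem_paths.2 hpath⟩, rfl⟩
  · obtain ⟨t, ht⟩ := (mem_paths.1 (mem_sigma.1 hx).2).exists_eq_cons
    have hsdiff : A \ (i :: x.2).toFinset = A.erase i \ x.2.toFinset := by
      ext
      simp only [List.toFinset_cons, mem_sdiff, mem_insert, mem_erase]
      tauto
    rw [hsdiff, ht, pathWeight_cons_cons, C_mul, mul_assoc]

end Paths

section Multiplicity

variable {n : ℕ} {r : Fin n → ℝ} {lam : Fin n → Fin n → ℝ} {A : Finset (Fin n)}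
  {i j v : Fin n} {l : List (Fin n)}

/-- Godsil's identity, by induction on `A` after expanding `μ(A)` and `μ(A ∖ j)` along `i`. -/
theorem pathSum_eq_mu_erase_mul_mu_erase_sub (hsym : ∀ j k, lam j k = lam k j) (hij : i ≠ j)
    (hi : i ∈ A) (hj : j ∈ A) :
    pathSum r lam A i j = mu r lam (A.erase i) * mu r lam (A.erase j) -
      mu r lam A * mu r lam ((A.erase i).erase j) := by
  induction A using Finset.strongInduction generalizing i with
  | H A ih =>
  have hexpA := mu_eq_X_sub_C_mul_add_sum (r := r) hsym hi
  have hexpAj := mu_eq_X_sub_C_mul_add_sum (r := r) hsym (mem_erase.2 ⟨hij, hi⟩ : i ∈ A.erase j)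
  rw [erase_right_comm] at hexpAj
  set B := A.erase i
  have hjB : j ∈ B := mem_erase.2 ⟨hij.symm, hj⟩
  have hsplit := (sum_erase_add B (fun u => C (lam i u) * mu r lam (B.erase u)) hjB).symm
  have hterms : ∑ u ∈ B.erase j, C (-lam i u) * pathSum r lam B u j =
      mu r lam B * ∑ u ∈ B.erase j, C (lam i u) * mu r lam ((B.erase j).erase u) -
        mu r lam (B.erase j) * ∑ u ∈ B.erase j, C (lam i u) * mu r lam (B.erase u) := by
    rw [mul_sum, mul_sum, ← sum_sub_distrib]
    refine sum_congr rfl fun u hu => ?_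
    obtain ⟨huj, huB⟩ := mem_erase.1 hu
    rw [ih B (erase_ssubset hi) huj huB hjB, erase_right_comm (a := u), map_neg]
    ring
  rw [pathSum_eq_sum_cons hi hij, ← sum_erase_add _ _ hjB, pathSum_self hjB, hterms, hexpA,
    hexpAj, hsplit, map_neg]
  ring

lemma wronskian_mu_erase (hsym : ∀ j k, lam j k = lam k j) (hi : i ∈ A) :
    wronskian (mu r lam (A.erase i)) (mu r lam A) = ∑ v ∈ A, pathSum r lam A v i := by
  have hterm : ∀ v ∈ A.erase i, pathSum r lam A v i =
      mu r lam (A.erase i) * mu r lam (A.erase v) - mu r lam ((A.erase i).erase v) * mu r lam A :=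
    fun v hv => by
      rw [pathSum_eq_mu_erase_mul_mu_erase_sub hsym (mem_erase.1 hv).1 (mem_erase.1 hv).2 hi,
        erase_right_comm]
      ring
  rw [wronskian, derivative_mu, derivative_mu, mul_sum, sum_mul, ← sum_erase_add A _ hi,
    ← sum_erase_add A _ hi, pathSum_self hi, sum_congr rfl hterm, sum_sub_distrib]
  ring

lemma not_pow_dvd_wronskian_mu_erase (hsym : ∀ j k, lam j k = lam k j)
    (hnonpos : ∀ j k, lam j k ≤ 0) (θ : ℝ) (hl : IsPathIn lam A v i l) :
    ¬ (X - C θ) ^ (2 * (mu r lam (A \ l.toFinset)).rootMultiplicity θ + 1) ∣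
      wronskian (mu r lam (A.erase i)) (mu r lam A) := by
  rw [wronskian_mu_erase hsym hl.right_mem]
  simp only [pathSum, sum_sigma']
  exact not_pow_dvd_sum_C_mul_sq (s := A.sigma fun a => paths lam A a i)
    (a := fun x => pathWeight lam x.2) (q := fun x => mu r lam (A \ x.2.toFinset)) θ
    (fun x hx => pathWeight_pos hnonpos (isPathIn_iff.1 (mem_paths.1 (mem_sigma.1 hx).2)).2.2.2.2.2)
    (fun x _ => mu_ne_zero _) (i₀ := ⟨v, l⟩) (mem_sigma.2 ⟨hl.left_mem, mem_paths.2 hl⟩)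

lemma rootMultiplicity_mu_le_add_one (hsym : ∀ j k, lam j k = lam k j)
    (hnonpos : ∀ j k, lam j k ≤ 0) (θ : ℝ) (A : Finset (Fin n)) (v : Fin n) :
    (mu r lam A).rootMultiplicity θ ≤ (mu r lam (A.erase v)).rootMultiplicity θ + 1 := by
  by_cases hv : v ∈ A
  · have hW := not_pow_dvd_wronskian_mu_erase (r := r) hsym hnonpos θ ((isPathIn_self_iff hv).2 rfl)
    rw [show A \ [v].toFinset = A.erase v by ext; simp [and_comm]] at hW
    by_contra! h
    exact hW ((pow_dvd_pow _ (by omega)).trans (pow_add_sub_one_dvd_wronskian _ _ θ))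
  · rw [erase_eq_of_notMem hv]
    omega

lemma rootMultiplicity_mu_erase_le_add_one (hsym : ∀ j k, lam j k = lam k j)
    (hnonpos : ∀ j k, lam j k ≤ 0) (θ : ℝ) (A : Finset (Fin n)) (v : Fin n) :
    (mu r lam (A.erase v)).rootMultiplicity θ ≤ (mu r lam A).rootMultiplicity θ + 1 := by
  by_cases hv : v ∈ A
  · have hdvd : (X - C θ) ^ ((mu r lam (A.erase v)).rootMultiplicity θ - 1) ∣ mu r lam A := by
      rw [mu_eq_X_sub_C_mul_add_sum hsym hv]
      refine dvd_add (dvd_mul_of_dvd_right ((pow_dvd_pow _ (Nat.sub_le _ _)).trans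
        (pow_rootMultiplicity_dvd _ θ)) _) (dvd_sum fun u _ => dvd_mul_of_dvd_right ?_ _)
      have := rootMultiplicity_mu_le_add_one (r := r) hsym hnonpos θ (A.erase v) u
      exact (pow_dvd_pow _ (by omega)).trans (pow_rootMultiplicity_dvd _ θ)
    have := (le_rootMultiplicity_iff (mu_ne_zero A)).2 hdvd
    omega
  · rw [erase_eq_of_notMem hv]
    omega

lemma rootMultiplicity_mu_erase_erase_eq_add_one (hsym : ∀ j k, lam j k = lam k j)
    (hnonpos : ∀ j k, lam j k ≤ 0) (θ : ℝ) (hij : i ≠ j) (hl : IsPathIn lam A i j l)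
    (hlt : (mu r lam (A \ l.toFinset)).rootMultiplicity θ <
      (mu r lam ((A.erase j).erase i)).rootMultiplicity θ) :
    (mu r lam ((A.erase j).erase i)).rootMultiplicity θ =
      (mu r lam (A.erase j)).rootMultiplicity θ + 1 := by
  obtain ⟨w, t, ht⟩ := (hl.reverse hsym).exists_eq_cons_cons hij.symm
  have hc := (isPathIn_cons_cons_iff.1 (ht ▸ hl.reverse hsym)).2.2
  have hsdiff : A.erase j \ (w :: t).toFinset = A \ l.toFinset := by
    have : l.toFinset = (j :: w :: t).toFinset := by rw [← List.toFinset_reverse, ht]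
    ext
    rw [this]
    simp only [List.toFinset_cons, mem_sdiff, mem_insert, mem_erase]
    tauto
  have hW := not_pow_dvd_wronskian_mu_erase (r := r) hsym hnonpos θ hc
  rw [hsdiff] at hW
  have hle := rootMultiplicity_mu_erase_le_add_one (r := r) hsym hnonpos θ (A.erase j) i
  by_contra h
  exact hW ((pow_dvd_pow _ (by omega)).trans (pow_add_sub_one_dvd_wronskian _ _ θ))

end Multiplicity

theorem stmt_11_general (n : ℕ) (r : Fin n → ℝ) (lam : Fin n → Fin n → ℝ)
    (hsym : ∀ j k, lam j k = lam k j) (hnonpos : ∀ j k, lam j k ≤ 0)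
    (θ : ℝ) (i j : Fin n) (hij : i ≠ j)
    (hpole : (lamSim r lam i j (Finset.univ : Finset (Fin n))).denom.eval θ = 0) :
    (mu r lam ((Finset.univ.erase j).erase i)).rootMultiplicity θ =
        (mu r lam (Finset.univ.erase j)).rootMultiplicity θ + 1 ∧
    (mu r lam ((Finset.univ.erase i).erase j)).rootMultiplicity θ =
        (mu r lam (Finset.univ.erase i)).rootMultiplicity θ + 1 := by
  rw [lamSim_eq] at hpole
  have hμ := mu_ne_zero (r := r) (lam := lam) ((univ.erase i).erase j)
  have hndvd := not_pow_rootMultiplicity_dvd_of_denom_eval_eq_zero (pow_ne_zero 2 hμ) hpole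
  rw [sq, rootMultiplicity_mul (mul_ne_zero hμ hμ), ← two_mul, dvd_neg, pathSum] at hndvd
  obtain ⟨l, hl, hlt⟩ := exists_rootMultiplicity_lt_of_not_pow_dvd_sum hndvd
  have hpath := mem_paths.1 hl
  exact ⟨rootMultiplicity_mu_erase_erase_eq_add_one hsym hnonpos θ hij hpath
      (by rwa [erase_right_comm]),
    rootMultiplicity_mu_erase_erase_eq_add_one hsym hnonpos θ hij.symm (hpath.reverse hsym)
      (by rwa [List.toFinset_reverse])⟩

/-- if the rational function `λ_{i∼j}` has a pole at `θ`, then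
`i ∈ ∞_{θ,G∖j}` and `j ∈ ∞_{θ,G∖i}`, i.e. `m_θ(G∖{i,j}) = m_θ(G∖j) + 1` and
`m_θ(G∖{i,j}) = m_θ(G∖i) + 1`. -/
theorem stmt_11 (n : ℕ) (hn : 0 < n) (r : Fin n → ℝ) (lam : Fin n → Fin n → ℝ)
    (hsym : ∀ j k, lam j k = lam k j) (hnonpos : ∀ j k, lam j k ≤ 0)
    (hdiag : ∀ i, lam i i = 0) (θ : ℝ) (i j : Fin n) (hij : i ≠ j)
    (hpole : (lamSim r lam i j (Finset.univ : Finset (Fin n))).denom.eval θ = 0) :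
    (mu r lam ((Finset.univ.erase j).erase i)).rootMultiplicity θ =
        (mu r lam (Finset.univ.erase j)).rootMultiplicity θ + 1 ∧
    (mu r lam ((Finset.univ.erase i).erase j)).rootMultiplicity θ =
        (mu r lam (Finset.univ.erase i)).rootMultiplicity θ + 1 :=
  stmt_11_general n r lam hsym hnonpos θ i j hij hpole
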